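/- Let F be the Leibniz algebra with basis {e_1, e_2, ...} and nonzero products [e_i, e_1] = e_{i+1} for i ≥ 2. For every derivation d of F there exist scalars α_1 and β_2, β_3, ..., β_t such that d(e_1) ≡ α_1 e_1 modulo the kernel of right multiplication, and d(e_i) = ((i-2)α_1 + β_2) e_i + Σ_{k=3}^{t} β_k e_{k+i-2} for all i ≥ 2. In particular, d(e_i) lies in span{e_i, e_{i+1}, ...} for every i ≥ 2. -/

import Mathlib

noncomputable section

/-- The underlying space; the basis vector `e_i` (i ≥ 1) is `Finsupp.single (i-1) 1`. -/
abbrev V : Type := ℕ →₀ ℂ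

/-- Shift-up map: `single n ↦ single (n+1)` for `n ≥ 1` (i.e. `e_i ↦ e_{i+1}` for `i ≥ 2`). -/
def sh1 : V →ₗ[ℂ] V :=
  Finsupp.lsum ℂ fun n => if 1 ≤ n then (Finsupp.lsingle (n + 1) : ℂ →ₗ[ℂ] V) else 0

/-- Bracket of the filiform Leibniz algebra `F`: `[e_i, e_1] = e_{i+1}` for `i ≥ 2`. -/
def brF (f g : V) : V := g 0 • sh1 f

lemma sh1_single (n : ℕ) (c : ℂ) :
    sh1 (Finsupp.single n c) = if 1 ≤ n then Finsupp.single (n+1) c else 0 := by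
  simp only [sh1, Finsupp.lsum_single]
  split <;> simp

lemma sh1_apply_succ (f : V) (n : ℕ) (hn : 1 ≤ n) : sh1 f (n+1) = f n := by
  have hf : f = f.sum fun a b => Finsupp.single a b := (Finsupp.sum_single f).symm
  conv_lhs => rw [hf]
  rw [map_finsuppSum, Finsupp.sum_apply, Finsupp.sum]
  have : ∀ a ∈ f.support, (sh1 (Finsupp.single a (f a))) (n+1)
      = if n = a then f a else 0 := by
    intro a _
    rw [sh1_single]
    rcases Nat.eq_zero_or_pos a with h | h
    · subst h; rw [if_neg (by omega), if_neg (by omega)]; simp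
    · rw [if_pos (by omega : 1 ≤ a), Finsupp.single_apply]
      by_cases hna : n = a
      · subst hna; simp
      · rw [if_neg (by omega), if_neg hna]
  rw [Finset.sum_congr rfl this, Finset.sum_ite_eq]
  split
  · rfl
  · exact (Finsupp.notMem_support_iff.mp (by assumption)).symm

/-- Description of the derivations of `F`: with `e_i = single (i-1)`, every derivation `d`
satisfies `d(e_1) ≡ α₁ e_1` modulo the right annihilator `{x | ∀ y, [y,x] = 0}`, and
`d(e_i) = ((i-2)α₁ + β₂) e_i + Σ_{k=3}^{t} β_k e_{k+i-2}` for all `i ≥ 2`; in particular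
`d(e_i) ∈ span{e_i, e_{i+1}, …}` for every `i ≥ 2`. -/
theorem stmt10 (d : V →ₗ[ℂ] V)
    (hd : ∀ x y : V, d (brF x y) = brF (d x) y + brF x (d y)) :
    ∃ (α : ℂ) (t : ℕ) (β : ℕ → ℂ),
      (∀ y : V, brF y (d (Finsupp.single 0 1) - α • Finsupp.single 0 (1 : ℂ)) = 0) ∧
      (∀ i : ℕ, 2 ≤ i →
        d (Finsupp.single (i - 1) 1) =
          (((i : ℂ) - 2) * α + β 2) • Finsupp.single (i - 1) (1 : ℂ) +
            ∑ k ∈ Finset.Icc 3 t, β k • Finsupp.single (k + i - 3) (1 : ℂ)) ∧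
      (∀ i : ℕ, 2 ≤ i →
        d (Finsupp.single (i - 1) 1) ∈
          Submodule.span ℂ {v : V | ∃ n : ℕ, i - 1 ≤ n ∧ v = Finsupp.single n (1 : ℂ)}) := by
  set α : ℂ := d (Finsupp.single 0 1) 0 with hαdef
  set f : V := d (Finsupp.single 1 1) with hfdef
  set t : ℕ := f.support.sup id + 2 with htdef
  -- f vanishes above t - 1
  have ht : ∀ n : ℕ, t ≤ n + 1 → f n = 0 := by
    intro n hn
    by_contra h
    have := Finset.le_sup (f := id) (Finsupp.mem_support_iff.mpr h)
    simp only [id] at this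
    omega
  -- f 0 = 0
  have hf0 : f 0 = 0 := by
    have h2 := hd (Finsupp.single 1 1) (Finsupp.single 1 1)
    simp only [brF, Finsupp.single_apply, if_neg (by omega : ¬ (1:ℕ) = 0), zero_smul,
      map_zero, sh1_single, if_pos (le_refl 1), ← hfdef] at h2
    have h3 := congrArg (fun v : V => v 2) h2
    simp at h3
    exact h3.symm
  -- derivation of e1 with itself: sh1 (d e1) = 0
  have h1 : sh1 (d (Finsupp.single 0 1)) = 0 := by
    have h := hd (Finsupp.single 0 1) (Finsupp.single 0 1)
    simp only [brF, Finsupp.single_apply, eq_self_iff_true, if_true, one_smul, sh1_single,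
      if_neg (by omega : ¬ (1:ℕ) ≤ 0), smul_zero, map_zero, add_zero] at h
    exact h.symm
  -- step recursion
  have step : ∀ j : ℕ, 1 ≤ j →
      d (Finsupp.single (j+1) 1) =
        sh1 (d (Finsupp.single j 1)) + α • Finsupp.single (j+1) (1:ℂ) := by
    intro j hj
    have h := hd (Finsupp.single j 1) (Finsupp.single 0 1)
    simp only [brF, Finsupp.single_apply, eq_self_iff_true, if_true, one_smul, sh1_single,
      if_pos hj, ← hαdef] at h
    exact h
  -- main formula
  have main : ∀ j : ℕ, 1 ≤ j →
      d (Finsupp.single j 1) =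
        (((j : ℂ) - 1) * α + f 1) • Finsupp.single j (1:ℂ) +
          ∑ k ∈ Finset.Icc 3 t, f (k-1) • Finsupp.single (k + j - 2) (1:ℂ) := by
    intro j hj
    induction j, hj using Nat.le_induction with
    | base =>
      ext n
      rw [Finsupp.add_apply, Finsupp.smul_apply, Finsupp.finset_sum_apply]
      have hterm : ∀ k ∈ Finset.Icc 3 t,
          (f (k-1) • Finsupp.single (k + 1 - 2) (1:ℂ)) n
            = if k = n + 1 then f n else 0 := by
        intro k hk
        simp only [Finset.mem_Icc] at hk
        rw [Finsupp.smul_apply, Finsupp.single_apply]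
        by_cases h : k = n + 1
        · rw [if_pos h, if_pos (by omega), h]
          simp
        · rw [if_neg (by omega), if_neg h, smul_zero]
      rw [Finset.sum_congr rfl hterm, Finset.sum_ite_eq' (Finset.Icc 3 t) (n+1)]
      rcases Nat.lt_or_ge n 2 with h | h
      · interval_cases n
        · simp [← hfdef, hf0, Finsupp.single_apply]
        · simp [← hfdef, Finsupp.single_apply]
      · rw [Finsupp.single_apply, if_neg (by omega)]
        by_cases hmem : n + 1 ∈ Finset.Icc 3 t
        · rw [if_pos hmem]; simp [← hfdef]
        · rw [if_neg hmem]
          simp only [Finset.mem_Icc, not_and, not_le] at hmem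
          rw [ht n (by omega)]
          simp
    | succ j hj ih =>
      rw [step j hj, ih, map_add, map_smul, map_sum, sh1_single, if_pos hj]
      have hsum : ∀ k ∈ Finset.Icc 3 t,
          sh1 (f (k-1) • Finsupp.single (k + j - 2) (1:ℂ))
            = f (k-1) • Finsupp.single (k + (j+1) - 2) (1:ℂ) := by
        intro k hk
        simp only [Finset.mem_Icc] at hk
        rw [map_smul, sh1_single, if_pos (by omega)]
        congr 2
        omega
      rw [Finset.sum_congr rfl hsum]
      have hc : ((↑(j+1) : ℂ) - 1) * α + f 1 = ((((j:ℂ) - 1) * α + f 1)) + α := by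
        push_cast; ring
      rw [hc, add_smul]
      module
  refine ⟨α, t, fun k => f (k - 1), ?_, ?_, ?_⟩
  · intro y
    rw [brF, Finsupp.sub_apply, Finsupp.smul_apply, Finsupp.single_eq_same, smul_eq_mul,
      mul_one, ← hαdef, sub_self, zero_smul]
  · intro i hi
    have h := main (i-1) (by omega)
    rw [h]
    have hcast : ((↑(i-1) : ℂ) - 1) = (i:ℂ) - 2 := by
      have : ((↑(i-1) : ℂ)) = (i:ℂ) - 1 := by
        push_cast [Nat.cast_sub (by omega : 1 ≤ i)]; ring
      rw [this]; ring
    rw [hcast]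
    congr 1
    apply Finset.sum_congr rfl
    intro k hk
    simp only [Finset.mem_Icc] at hk
    congr 2
    omega
  · intro i hi
    rw [main (i-1) (by omega)]
    apply Submodule.add_mem
    · exact Submodule.smul_mem _ _ (Submodule.subset_span ⟨i-1, le_refl _, rfl⟩)
    · apply Submodule.sum_mem
      intro k hk
      simp only [Finset.mem_Icc] at hk
      exact Submodule.smul_mem _ _ (Submodule.subset_span ⟨k + (i-1) - 2, by omega, rfl⟩)
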